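/- arXiv:2603.03027 — 6 statements merged into one kernel-verified Lean document; each statement's English description precedes it below -/
import Mathlib

section
/- Every 2-cocycle on the infinite dihedral group D∞ with values in ℂˣ (with trivial action) is a coboundary; that is, H²(D∞, ℂˣ) with trivial coefficients vanishes. -/
/-!
Twisting `G × A` by a cocycle `μ` gives a central extension `E` of `G` by `A`, and `μ` is a
coboundary as soon as `E → G` has a homomorphic section. The infinite dihedral group is the free
product of the two copies of `ℤ/2` generated by the reflections `sr 0` and `sr 1`, so such a
section exists once both reflections lift to involutions of `E`. Lifting an involution `g` only
requires a square root of `(μ 1 1 * μ g g)⁻¹`, and every element of `ℂˣ` has one.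
-/

variable {G A : Type*} [Group G] [CommGroup A]

variable (G A) in
structure TwoCocycle where
  toFun : G → G → A
  cocycle : ∀ g h k : G, toFun g h * toFun (g * h) k = toFun h k * toFun g (h * k)

namespace TwoCocycle

instance : CoeFun (TwoCocycle G A) fun _ => G → G → A := ⟨toFun⟩

def IsCoboundary (μ : TwoCocycle G A) : Prop :=
  ∃ f : G → A, ∀ g h : G, μ g h = f g * f h * (f (g * h))⁻¹

lemma map_one_left (μ : TwoCocycle G A) (g : G) : μ 1 g = μ 1 1 := by
  simpa using (μ.cocycle 1 1 g).symm

@[ext] structure Extension (μ : TwoCocycle G A) where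
  fst : A
  snd : G

namespace Extension

variable {μ : TwoCocycle G A}

instance : Mul μ.Extension := ⟨fun x y => ⟨x.fst * y.fst * μ x.snd y.snd, x.snd * y.snd⟩⟩

-- `μ` need not be normalized, so the identity is `(μ 1 1)⁻¹` rather than `1`.
instance : One μ.Extension := ⟨⟨(μ 1 1)⁻¹, 1⟩⟩

instance : Inv μ.Extension := ⟨fun x => ⟨(μ 1 1 * x.fst * μ x.snd⁻¹ x.snd)⁻¹, x.snd⁻¹⟩⟩

@[simp] lemma fst_mul (x y : μ.Extension) : (x * y).fst = x.fst * y.fst * μ x.snd y.snd := rfl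
@[simp] lemma snd_mul (x y : μ.Extension) : (x * y).snd = x.snd * y.snd := rfl
@[simp] lemma fst_one : (1 : μ.Extension).fst = (μ 1 1)⁻¹ := rfl
@[simp] lemma snd_one : (1 : μ.Extension).snd = 1 := rfl
@[simp] lemma fst_inv (x : μ.Extension) : x⁻¹.fst = (μ 1 1 * x.fst * μ x.snd⁻¹ x.snd)⁻¹ := rfl
@[simp] lemma snd_inv (x : μ.Extension) : x⁻¹.snd = x.snd⁻¹ := rfl

instance : Group μ.Extension := Group.ofLeftAxioms
  (fun ⟨a, g⟩ ⟨b, h⟩ ⟨c, k⟩ => by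
    ext
    · have := μ.cocycle g h k
      simp only [fst_mul, snd_mul]
      calc a * b * μ g h * c * μ (g * h) k = a * b * c * (μ g h * μ (g * h) k) := by ac_rfl
        _ = a * (b * c * μ h k) * μ g (h * k) := by rw [this]; ac_rfl
    · exact mul_assoc g h k)
  (fun x => by ext <;> simp [map_one_left])
  (fun x => by ext <;> simp [mul_comm, mul_left_comm])

def proj : μ.Extension →* G where
  toFun := snd
  map_one' := rfl
  map_mul' _ _ := rfl

@[simp] lemma proj_apply (x : μ.Extension) : proj x = x.snd := rfl

end Extension

open Extension

theorem isCoboundary_of_splitting (μ : TwoCocycle G A) (σ : G →* μ.Extension)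
    (hσ : proj.comp σ = MonoidHom.id G) : μ.IsCoboundary := by
  refine ⟨fun g => (σ g).fst⁻¹, fun g h => ?_⟩
  have hsnd (g : G) : (σ g).snd = g := DFunLike.congr_fun hσ g
  have hfst := congrArg fst (map_mul σ g h)
  rw [fst_mul, hsnd, hsnd] at hfst
  simp only [hfst, inv_inv]
  rw [← mul_inv, inv_mul_cancel_left]

theorem exists_lift_of_mul_self_eq_one (μ : TwoCocycle G A) (hA : ∀ a : A, IsSquare a)
    {g : G} (hg : g * g = 1) : ∃ x : μ.Extension, x.snd = g ∧ x * x = 1 := by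
  obtain ⟨a, ha⟩ := hA (μ 1 1 * μ g g)⁻¹
  refine ⟨⟨a, g⟩, rfl, ?_⟩
  ext
  · simp [← ha]
  · exact hg

end TwoCocycle

section

variable {H : Type*} [Group H]

theorem zpow_mul_eq_mul_zpow_neg_of_mul_self_eq_one {a b : H} (ha : a * a = 1) (hb : b * b = 1)
    (n : ℤ) : (a * b) ^ n * a = a * (a * b) ^ (-n) := by
  have hinv : (a * b)⁻¹ = b * a := by
    rw [mul_inv_rev, inv_eq_of_mul_eq_one_right ha, inv_eq_of_mul_eq_one_right hb]
  have hconj : SemiconjBy a (a * b)⁻¹ (a * b) := by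
    rw [SemiconjBy, hinv, mul_assoc]
  rw [zpow_neg, ← inv_zpow, (hconj.zpow_right n).eq]

namespace DihedralGroup

-- `ZMod 0` is `ℤ` by definition, which lets the constructor arguments serve as exponents.
def liftOfMulSelfEqOne (a b : H) (ha : a * a = 1) (hb : b * b = 1) : DihedralGroup 0 →* H where
  toFun
    | r (n : ℤ) => (a * b) ^ n
    | sr (n : ℤ) => a * (a * b) ^ n
  map_one' := zpow_zero _
  map_mul' := by
    have hconj := zpow_mul_eq_mul_zpow_neg_of_mul_self_eq_one ha hb
    have r_mul_sr (i j : ℤ) : a * (a * b) ^ (j - i) = (a * b) ^ i * (a * (a * b) ^ j) := by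
      rw [← mul_assoc, hconj, mul_assoc, ← zpow_add, neg_add_eq_sub]
    have sr_mul_sr (i j : ℤ) : (a * b) ^ (j - i) = a * (a * b) ^ i * (a * (a * b) ^ j) := by
      rw [← mul_assoc, mul_assoc a (_ ^ i) a, hconj, ← mul_assoc a a, ha, one_mul, ← zpow_add,
        neg_add_eq_sub]
    have sr_mul_r (i j : ℤ) : a * (a * b) ^ (i + j) = a * (a * b) ^ i * (a * b) ^ j := by
      rw [mul_assoc, zpow_add]
    rintro (i | i) (j | j)
    · exact zpow_add _ i j
    · exact r_mul_sr i j
    · exact sr_mul_r i j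
    · exact sr_mul_sr i j

@[simp] lemma liftOfMulSelfEqOne_sr_zero {a b : H} (ha : a * a = 1) (hb : b * b = 1) :
    liftOfMulSelfEqOne a b ha hb (sr 0) = a :=
  (congrArg (a * ·) (zpow_zero _)).trans (mul_one a)

@[simp] lemma liftOfMulSelfEqOne_sr_one {a b : H} (ha : a * a = 1) (hb : b * b = 1) :
    liftOfMulSelfEqOne a b ha hb (sr 1) = b :=
  (congrArg (a * ·) (zpow_one _)).trans (by rw [← mul_assoc, ha, one_mul])

theorem hom_ext_sr_zero_sr_one {f g : DihedralGroup 0 →* H} (h0 : f (sr 0) = g (sr 0))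
    (h1 : f (sr 1) = g (sr 1)) : f = g := by
  have hr (n : ℤ) : r n = (sr 0 * sr 1 : DihedralGroup 0) ^ n := by
    rw [sr_mul_sr, sub_zero, r_one_zpow]; rfl
  ext (n | n)
  · change ℤ at n
    simp only [hr, map_zpow, map_mul, h0, h1]
  · rw [← zero_add n, ← sr_mul_r]
    change ℤ at n
    simp only [hr, map_zpow, map_mul, h0, h1]

end DihedralGroup

end

theorem Units.isSquare_of_isSquare_val {G₀ : Type*} [GroupWithZero G₀] {u : G₀ˣ}
    (h : IsSquare (u : G₀)) : IsSquare u := by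
  obtain ⟨r, hr⟩ := h
  have hr0 : r ≠ 0 := by
    rintro rfl
    simp at hr
  exact ⟨Units.mk0 r hr0, Units.ext (by simpa using hr)⟩

open DihedralGroup TwoCocycle.Extension in
theorem TwoCocycle.isCoboundary_of_dihedralGroup_zero (hA : ∀ a : A, IsSquare a)
    (μ : TwoCocycle (DihedralGroup 0) A) : μ.IsCoboundary := by
  obtain ⟨s, hs, hss⟩ := μ.exists_lift_of_mul_self_eq_one hA (sr_mul_self 0)
  obtain ⟨t, ht, htt⟩ := μ.exists_lift_of_mul_self_eq_one hA (sr_mul_self 1)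
  exact μ.isCoboundary_of_splitting (liftOfMulSelfEqOne s t hss htt)
    (hom_ext_sr_zero_sr_one (by simp [hs]) (by simp [ht]))

/-- Every 2-cocycle on the infinite dihedral group D∞ (realized in Mathlib as
`DihedralGroup 0`, i.e. ℤ ⋊ ℤ/2ℤ with the inversion action, equivalently
(ℤ/2ℤ) * (ℤ/2ℤ)) with values in ℂˣ (trivial action) is a coboundary:
H²(D∞, ℂˣ) = 0. -/
theorem h2_infinite_dihedral_units_complex_vanishes
    (μ : DihedralGroup 0 → DihedralGroup 0 → ℂˣ)
    (hcocycle : ∀ g h k : DihedralGroup 0,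
      μ g h * μ (g * h) k = μ h k * μ g (h * k)) :
    ∃ f : DihedralGroup 0 → ℂˣ,
      ∀ g h : DihedralGroup 0, μ g h = f g * f h * (f (g * h))⁻¹ :=
  TwoCocycle.isCoboundary_of_dihedralGroup_zero
    (fun a : ℂˣ => Units.isSquare_of_isSquare_val (Complex.isSquare a)) ⟨μ, hcocycle⟩
end

section
/- For every w, z ∈ ℂˣ, the only ℂ-subspaces U of ℂ² that are invariant under all three matrices S, X(z), and Y(w) (i.e., S·U ⊆ U, X(z)·U ⊆ U, Y(w)·U ⊆ U) are the zero subspace and ℂ² itself. In other words, the 2-dimensional representation M_{w,z} of the twisted algebra is simple. -/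
open Matrix

/-- The matrix S = [[0,1],[1,0]]. -/
def Smat : Matrix (Fin 2) (Fin 2) ℂ := !![0, 1; 1, 0]

/-- The matrix X(z) = [[z,0],[0,z⁻¹]]. -/
noncomputable def Xmat (z : ℂˣ) : Matrix (Fin 2) (Fin 2) ℂ :=
  !![(z : ℂ), 0; 0, ((z⁻¹ : ℂˣ) : ℂ)]

/-- The matrix Y(w) = [[w,0],[0,−w]]. -/
def Ymat (w : ℂˣ) : Matrix (Fin 2) (Fin 2) ℂ :=
  !![(w : ℂ), 0; 0, -(w : ℂ)]

lemma aux_e0 (w : ℂˣ) (U : Submodule ℂ (Fin 2 → ℂ))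
    (hY : ∀ v ∈ U, (Ymat w).mulVec v ∈ U)
    (v : Fin 2 → ℂ) (hv : v ∈ U) (h0 : v 0 ≠ 0) :
    (![1, 0] : Fin 2 → ℂ) ∈ U := by
  have hu : ((2 * v 0)⁻¹ : ℂ) • (((w : ℂ)⁻¹ : ℂ) • (Ymat w).mulVec v + v) ∈ U :=
    U.smul_mem _ (U.add_mem (U.smul_mem _ (hY v hv)) hv)
  convert hu using 1
  have hw : (w : ℂ) ≠ 0 := w.ne_zero
  funext i
  fin_cases i <;>
    simp [Ymat, mulVec, dotProduct, Fin.sum_univ_two, Matrix.vecHead, Matrix.vecTail] <;>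
    field_simp <;> ring

/-- For every w, z ∈ ℂˣ the only subspaces of ℂ² invariant under all of
S, X(z), Y(w) are 0 and ℂ²: the 2-dimensional module M_{w,z} of the twisted
algebra is simple. -/
theorem twisted_module_simple (w z : ℂˣ)
    (U : Submodule ℂ (Fin 2 → ℂ))
    (hS : ∀ v ∈ U, Smat.mulVec v ∈ U)
    (hX : ∀ v ∈ U, (Xmat z).mulVec v ∈ U)
    (hY : ∀ v ∈ U, (Ymat w).mulVec v ∈ U) :
    U = ⊥ ∨ U = ⊤ := by
  by_cases hbot : U = ⊥
  · exact Or.inl hbot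
  right
  obtain ⟨v, hv, hvne⟩ := Submodule.exists_mem_ne_zero_of_ne_bot hbot
  have he0 : (![1, 0] : Fin 2 → ℂ) ∈ U := by
    by_cases h0 : v 0 ≠ 0
    · exact aux_e0 w U hY v hv h0
    · push_neg at h0
      have h1 : v 1 ≠ 0 := by
        intro h1
        apply hvne
        funext i; fin_cases i <;> simp [h0, h1]
      have hSv : Smat.mulVec v ∈ U := hS v hv
      apply aux_e0 w U hY _ hSv
      simp [Smat, mulVec, dotProduct, Fin.sum_univ_two, h1]
  have he1 : (![0, 1] : Fin 2 → ℂ) ∈ U := by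
    have := hS _ he0
    convert this using 1
    funext i; fin_cases i <;> simp [Smat, mulVec, dotProduct, Fin.sum_univ_two]
  rw [Submodule.eq_top_iff']
  intro x
  have hx : x = x 0 • (![1, 0] : Fin 2 → ℂ) + x 1 • ![0, 1] := by
    funext i; fin_cases i <;> simp
  rw [hx]
  exact U.add_mem (U.smul_mem _ he0) (U.smul_mem _ he1)
end

section
/- For every w, z ∈ ℂˣ there is a unital ℂ-algebra homomorphism ρ_{w,z} : A → M₂(ℂ) from the twisted algebra A to 2×2 complex matrices sending s ↦ S, x ↦ X(z), x' ↦ X(z)⁻¹, y ↦ Y(w), y' ↦ Y(w)⁻¹ (the matrices satisfy all defining relations of A); moreover conjugation by S intertwines ρ_{w,z} and ρ_{−w,z⁻¹}: S·S·S⁻¹ = S, S·X(z)·S⁻¹ = X(z⁻¹), and S·Y(w)·S⁻¹ = Y(−w), so that M_{w,z} ≅ M_{−w,z⁻¹}. -/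
open Matrix

/-- Generators of the twisted algebra: s, x, x', y, y'. -/
inductive TwGen | s | x | x' | y | y'

/-- The defining relations of the twisted group algebra
ℂ[(ℤ ⋊ ℤ/2) × ℤ, μ]: s² = 1, x·x' = x'·x = 1, y·y' = y'·y = 1,
s·x = x'·s, s·y = −y·s, x·y = y·x. -/
inductive TwRel : FreeAlgebra ℂ TwGen → FreeAlgebra ℂ TwGen → Prop
  | s_sq : TwRel (FreeAlgebra.ι ℂ TwGen.s * FreeAlgebra.ι ℂ TwGen.s) 1
  | xx' : TwRel (FreeAlgebra.ι ℂ TwGen.x * FreeAlgebra.ι ℂ TwGen.x') 1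
  | x'x : TwRel (FreeAlgebra.ι ℂ TwGen.x' * FreeAlgebra.ι ℂ TwGen.x) 1
  | yy' : TwRel (FreeAlgebra.ι ℂ TwGen.y * FreeAlgebra.ι ℂ TwGen.y') 1
  | y'y : TwRel (FreeAlgebra.ι ℂ TwGen.y' * FreeAlgebra.ι ℂ TwGen.y) 1
  | sx : TwRel (FreeAlgebra.ι ℂ TwGen.s * FreeAlgebra.ι ℂ TwGen.x)
      (FreeAlgebra.ι ℂ TwGen.x' * FreeAlgebra.ι ℂ TwGen.s)
  | sy : TwRel (FreeAlgebra.ι ℂ TwGen.s * FreeAlgebra.ι ℂ TwGen.y)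
      (-(FreeAlgebra.ι ℂ TwGen.y * FreeAlgebra.ι ℂ TwGen.s))
  | xy : TwRel (FreeAlgebra.ι ℂ TwGen.x * FreeAlgebra.ι ℂ TwGen.y)
      (FreeAlgebra.ι ℂ TwGen.y * FreeAlgebra.ι ℂ TwGen.x)

/-- The twisted algebra A = ℂ[(ℤ ⋊ ℤ/2) × ℤ, μ], presented by generators and
relations. -/
abbrev TwAlg := RingQuot TwRel

noncomputable def aS : TwAlg := RingQuot.mkAlgHom ℂ TwRel (FreeAlgebra.ι ℂ TwGen.s)
noncomputable def aX : TwAlg := RingQuot.mkAlgHom ℂ TwRel (FreeAlgebra.ι ℂ TwGen.x)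
noncomputable def aX' : TwAlg := RingQuot.mkAlgHom ℂ TwRel (FreeAlgebra.ι ℂ TwGen.x')
noncomputable def aY : TwAlg := RingQuot.mkAlgHom ℂ TwRel (FreeAlgebra.ι ℂ TwGen.y)
noncomputable def aY' : TwAlg := RingQuot.mkAlgHom ℂ TwRel (FreeAlgebra.ι ℂ TwGen.y')

noncomputable def gmat (w z : ℂˣ) : TwGen → Matrix (Fin 2) (Fin 2) ℂ
  | TwGen.s => Smat
  | TwGen.x => Xmat z
  | TwGen.x' => Xmat z⁻¹
  | TwGen.y => Ymat w
  | TwGen.y' => Ymat w⁻¹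

lemma XX (z : ℂˣ) : Xmat z * Xmat z⁻¹ = 1 := by
  simp [Xmat, Matrix.mul_fin_two, Matrix.one_fin_two, ← Units.val_mul]

lemma XX' (z : ℂˣ) : Xmat z⁻¹ * Xmat z = 1 := by
  simp [Xmat, Matrix.mul_fin_two, Matrix.one_fin_two, ← Units.val_mul]

lemma YY (w : ℂˣ) : Ymat w * Ymat w⁻¹ = 1 := by
  simp [Ymat, Matrix.mul_fin_two, Matrix.one_fin_two, ← Units.val_mul]

lemma YY' (w : ℂˣ) : Ymat w⁻¹ * Ymat w = 1 := by
  simp [Ymat, Matrix.mul_fin_two, Matrix.one_fin_two, ← Units.val_mul]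

/-- For every w, z ∈ ℂˣ there is a unital ℂ-algebra homomorphism
ρ_{w,z} : A → M₂(ℂ) sending s ↦ S, x ↦ X(z), x' ↦ X(z)⁻¹, y ↦ Y(w),
y' ↦ Y(w)⁻¹; moreover conjugation by S intertwines ρ_{w,z} and ρ_{−w,z⁻¹},
so that M_{w,z} ≅ M_{−w,z⁻¹}. -/
theorem twisted_alg_two_dim_reps (w z : ℂˣ) :
    (∃ ρ : TwAlg →ₐ[ℂ] Matrix (Fin 2) (Fin 2) ℂ,
      ρ aS = Smat ∧ ρ aX = Xmat z ∧ ρ aX' = (Xmat z)⁻¹ ∧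
      ρ aY = Ymat w ∧ ρ aY' = (Ymat w)⁻¹) ∧
    Smat * Smat * Smat⁻¹ = Smat ∧
    Smat * Xmat z * Smat⁻¹ = Xmat z⁻¹ ∧
    Smat * Ymat w * Smat⁻¹ = Ymat (-w) := by
  have hXinv : (Xmat z)⁻¹ = Xmat z⁻¹ := Matrix.inv_eq_right_inv (XX z)
  have hYinv : (Ymat w)⁻¹ = Ymat w⁻¹ := Matrix.inv_eq_right_inv (YY w)
  have hSinv : Smat⁻¹ = Smat := Matrix.inv_eq_right_inv (by
    simp [Smat, Matrix.mul_fin_two, Matrix.one_fin_two])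
  constructor
  · refine ⟨RingQuot.liftAlgHom ℂ ⟨FreeAlgebra.lift ℂ (gmat w z), ?_⟩, ?_, ?_, ?_, ?_, ?_⟩
    · intro a b h
      induction h <;>
        simp [gmat, XX z, XX' z, YY w, YY' w, Smat, Xmat, Ymat,
          Matrix.mul_fin_two, Matrix.one_fin_two, ← Units.val_mul, mul_comm]
    all_goals
      simp [aS, aX, aX', aY, aY', RingQuot.liftAlgHom_mkAlgHom_apply, gmat, hXinv, hYinv]
  · refine ⟨?_, ?_, ?_⟩ <;> rw [hSinv] <;>
      simp [Smat, Xmat, Ymat, Matrix.mul_fin_two]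
end

section
/- Let w, z, w', z' ∈ ℂˣ and suppose T is an invertible 2×2 complex matrix satisfying T·S = S·T, T·X(z) = X(z')·T, and T·Y(w) = Y(w')·T. Then either (w',z') = (w,z) or (w',z') = (−w, z⁻¹). Hence the 2-dimensional simple modules M_{w,z} of the twisted algebra are pairwise non-isomorphic except for the identification M_{w,z} ≅ M_{−w,z⁻¹}. -/
open Matrix

/-- If an invertible 2×2 matrix T intertwines the triples of matrices
(S, X(z), Y(w)) and (S, X(z'), Y(w')), then (w',z') = (w,z) or
(w',z') = (−w,z⁻¹): the simple modules M_{w,z} are pairwise non-isomorphic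
except for the identification M_{w,z} ≅ M_{−w,z⁻¹}. -/
theorem twisted_modules_isomorphism_classification
    (w z w' z' : ℂˣ) (T : Matrix (Fin 2) (Fin 2) ℂ) (hT : IsUnit T)
    (hS : T * Smat = Smat * T)
    (hX : T * Xmat z = Xmat z' * T)
    (hY : T * Ymat w = Ymat w' * T) :
    (w' = w ∧ z' = z) ∨ (w' = -w ∧ z' = z⁻¹) := by
  set a := T 0 0 with ha
  set b := T 0 1 with hb
  set c := T 1 0 with hc
  set d := T 1 1 with hd
  have eS : ∀ i j, (T * Smat) i j = (Smat * T) i j := fun i j => by rw [hS]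
  have eX : ∀ i j, (T * Xmat z) i j = (Xmat z' * T) i j := fun i j => by rw [hX]
  have eY : ∀ i j, (T * Ymat w) i j = (Ymat w' * T) i j := fun i j => by rw [hY]
  have h1 := eS 0 0; have h2 := eS 0 1
  have x1 := eX 0 0; have x2 := eX 0 1
  have y1 := eY 0 0; have y2 := eY 0 1
  simp [Matrix.mul_apply, Fin.sum_univ_two, Smat, Xmat, Ymat, ← ha, ← hb, ← hc, ← hd]
    at h1 h2 x1 x2 y1 y2
  -- h1 : b = c, h2 : a = d
  -- x1 : a * z = z' * a, x2 : b * z⁻¹ = z' * b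
  -- y1 : a * w = w' * a, y2 : b * (-w) = w' * b
  have hdet : a * d - b * c ≠ 0 := by
    have := (Matrix.isUnit_iff_isUnit_det T).mp hT
    rw [Matrix.det_fin_two] at this
    exact this.ne_zero
  by_cases hA : a = 0
  · have hb0 : b ≠ 0 := by
      intro h; apply hdet; rw [hA, h]; ring
    right
    constructor
    · exact Units.ext (by
        have := mul_right_cancel₀ hb0 (show (w' : ℂ) * b = -(w : ℂ) * b by linear_combination -y2)
        simpa using this)
    · exact Units.ext (by
        have := mul_right_cancel₀ hb0
          (show (z' : ℂ) * b = ((z : ℂ))⁻¹ * b by linear_combination -x2)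
        simpa [Units.val_inv_eq_inv_val] using this)
  · left
    constructor
    · exact Units.ext (mul_right_cancel₀ hA
        (show (w' : ℂ) * a = (w : ℂ) * a by linear_combination -y1))
    · exact Units.ext (mul_right_cancel₀ hA
        (show (z' : ℂ) * a = (z : ℂ) * a by linear_combination -x1))
end

section
/- Every simple module over the twisted algebra A is 2-dimensional as a complex vector space: if M is a nonzero A-module with no submodules other than 0 and M, then dim_ℂ M = 2. -/
open Matrix

/-!
The algebra `A` has countable dimension over the uncountable field `ℂ`, so by Dixmier's form of
Schur's lemma its central elements `x + x'` and `y²` act on a simple module `M` by scalars `a`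
and `b`. Hence `x² - a x + 1` and `y² - b` vanish on `M`, and as `x` and `y` commute they have a
common eigenvector `m`, with `y m = δ m` and `δ ≠ 0`. The relations `s x = x' s`, `s y = -y s`
make `s m` a common eigenvector as well, with `y (s m) = -δ s m`; so `span {m, s m}` is stable
under all generators, hence equals `M`, and it is `2`-dimensional because `δ ≠ -δ`.
-/

open Cardinal

universe u

theorem IsAlgClosed.algebraMap_surjective_of_rank_lt {k K : Type u} [Field k] [IsAlgClosed k]
    [Field K] [Algebra k K] (h : Module.rank k K < #k) : Function.Surjective (algebraMap k K) :=
  have : Algebra.IsAlgebraic k K :=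
    ⟨fun _ => by_contra fun hx =>
      h.not_ge (Transcendental.linearIndependent_sub_inv hx).cardinal_le_rank⟩
  IsAlgClosed.algebraMap_bijective_of_isIntegral.2

theorem Subring.exists_algebraMap_eq_of_mem_center {k D : Type u} [Field k] [IsAlgClosed k]
    [DivisionRing D] [Algebra k D] (h : Module.rank k D < #k) {φ : D}
    (hφ : φ ∈ Subring.center D) : ∃ c : k, algebraMap k D c = φ := by
  let : Algebra k (Subring.center D) :=
    ((algebraMap k D).codRestrict _ Set.algebraMap_mem_center).toAlgebra
  have hrank : Module.rank k (Subring.center D) ≤ Module.rank k D :=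
    LinearMap.rank_le_of_injective
      { toFun := Subtype.val, map_add' := fun _ _ => rfl,
        map_smul' := fun c x => (Algebra.smul_def c (x : D)).symm } Subtype.val_injective
  obtain ⟨c, hc⟩ := IsAlgClosed.algebraMap_surjective_of_rank_lt (hrank.trans_lt h) ⟨φ, hφ⟩
  exact ⟨c, congrArg Subtype.val hc⟩

theorem IsSimpleModule.rank_end_le (k : Type u) {A M : Type u} [Field k] [Ring A] [Algebra k A]
    [AddCommGroup M] [Module A M] [Module k M] [IsScalarTower k A M] [IsSimpleModule A M] :
    Module.rank k (Module.End A M) ≤ Module.rank k M := by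
  have := IsSimpleModule.nontrivial A M
  obtain ⟨m, hm⟩ := exists_ne (0 : M)
  refine LinearMap.rank_le_of_injective (LinearMap.applyₗ' k m) fun f g hfg => ?_
  by_contra hne
  exact hm <| LinearMap.injective_of_ne_zero (sub_ne_zero.2 hne) <| by
    simpa [sub_eq_zero] using hfg

theorem IsSimpleModule.rank_le (k : Type u) {A M : Type u} [Field k] [Ring A] [Algebra k A]
    [AddCommGroup M] [Module A M] [Module k M] [IsScalarTower k A M] [IsSimpleModule A M] :
    Module.rank k M ≤ Module.rank k A := by
  have := IsSimpleModule.nontrivial A M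
  obtain ⟨m, hm⟩ := exists_ne (0 : M)
  exact LinearMap.rank_le_of_surjective ((LinearMap.toSpanSingleton A M m).restrictScalars k)
    (IsSimpleModule.toSpanSingleton_surjective A hm)

theorem RingQuot.rank_le_aleph0 (k : Type u) {X : Type u} [Field k] [Countable X]
    (r : FreeAlgebra k X → FreeAlgebra k X → Prop) : Module.rank k (RingQuot r) ≤ ℵ₀ := by
  refine (LinearMap.rank_le_of_surjective (RingQuot.mkAlgHom k r).toLinearMap
    (RingQuot.mkAlgHom_surjective k r)).trans ?_
  rw [FreeAlgebra.rank_eq, lift_id]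
  exact mk_le_aleph0

theorem IsSimpleModule.exists_smul_eq_of_mem_center {k A M : Type u} [Field k] [IsAlgClosed k]
    [Ring A] [Algebra k A] [AddCommGroup M] [Module A M] [Module k M] [IsScalarTower k A M]
    [IsSimpleModule A M] (h : Module.rank k A < #k) {z : A} (hz : z ∈ Subalgebra.center k A) :
    ∃ c : k, ∀ m : M, z • m = c • m := by
  classical
  let φ : Module.End A M :=
    { toFun := (z • ·)
      map_add' := smul_add z
      map_smul' := fun a m => by
        simp only [RingHom.id_apply, smul_smul, (Subalgebra.mem_center_iff.1 hz a)] }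
  have hφ : φ ∈ Subring.center (Module.End A M) :=
    Subring.mem_center_iff.2 fun f => LinearMap.ext fun m => f.map_smul z m
  obtain ⟨c, hc⟩ := Subring.exists_algebraMap_eq_of_mem_center
    (((rank_end_le k).trans (rank_le k)).trans_lt h) hφ
  exact ⟨c, fun m => (LinearMap.congr_fun hc m).symm⟩

theorem Subalgebra.mem_center_of_forall_commute {k A : Type*} [CommRing k] [Ring A] [Algebra k A]
    {s : Set A} (hs : Algebra.adjoin k s = ⊤) {z : A} (h : ∀ a ∈ s, Commute z a) :
    z ∈ Subalgebra.center k A :=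
  Subalgebra.mem_center_iff.2 fun _ =>
    (Algebra.commute_of_mem_adjoin_of_forall_mem_commute (hs ▸ Algebra.mem_top) h).eq.symm

theorem IsSimpleModule.eq_top_of_forall_smul_mem {k A M : Type*} [CommRing k] [Ring A]
    [Algebra k A] [AddCommGroup M] [Module A M] [Module k M] [IsScalarTower k A M]
    [IsSimpleModule A M] {s : Set A} (hs : Algebra.adjoin k s = ⊤) {W : Submodule k M}
    (hW : ∀ a ∈ s, ∀ w ∈ W, a • w ∈ W) (hW0 : W ≠ ⊥) : W = ⊤ := by
  have hstable (a : A) : ∀ w ∈ W, a • w ∈ W := by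
    induction hs ▸ Algebra.mem_top (x := a) using Algebra.adjoin_induction with
    | mem a ha => exact hW a ha
    | algebraMap c => exact fun w hw => (algebraMap_smul A c w).symm ▸ W.smul_mem c hw
    | add a b _ _ ha hb =>
      exact fun w hw => (add_smul a b w).symm ▸ W.add_mem (ha w hw) (hb w hw)
    | mul a b _ _ ha hb => exact fun w hw => (mul_smul a b w).symm ▸ ha _ (hb w hw)
  let N : Submodule A M := { W.toAddSubmonoid with smul_mem' := hstable }
  have hN : N.restrictScalars k = W := rfl
  rw [← hN, (eq_bot_or_eq_top N).resolve_left ?_, Submodule.restrictScalars_top]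
  intro hN0
  exact hW0 (by rw [← hN, hN0, Submodule.restrictScalars_bot])

theorem Module.End.exists_eigenvector_mem_of_quadratic {k M : Type*} [Field k]
    [AddCommGroup M] [Module k M] (f : Module.End k M) {α β : k} {P : Submodule k M}
    (hP : ∀ m ∈ P, f m ∈ P) (hf : ∀ m ∈ P, f (f m - β • m) = α • (f m - β • m))
    {m : M} (hmP : m ∈ P) (hm : m ≠ 0) :
    ∃ n ∈ P, n ≠ 0 ∧ ∃ μ : k, f n = μ • n := by
  by_cases hβ : f m = β • m
  · exact ⟨m, hmP, hm, β, hβ⟩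
  · exact ⟨f m - β • m, P.sub_mem (hP m hmP) (P.smul_mem β hmP), sub_ne_zero.2 hβ, α,
      hf m hmP⟩

theorem Units.inv_smul_eq_inv_smul_of_smul_eq {k A M : Type*} [Field k] [Ring A] [Algebra k A]
    [AddCommGroup M] [Module A M] [Module k M] [IsScalarTower k A M] (u : Aˣ) {m : M} {μ : k}
    (hm : m ≠ 0) (h : (u : A) • m = μ • m) : (↑u⁻¹ : A) • m = μ⁻¹ • m := by
  have hμ : μ ≠ 0 := by
    rintro rfl
    rw [zero_smul, ← u.smul_def, smul_eq_zero_iff_eq] at h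
    exact hm h
  calc (↑u⁻¹ : A) • m = μ⁻¹ • μ • (↑u⁻¹ : A) • m := (inv_smul_smul₀ hμ _).symm
    _ = μ⁻¹ • m := by rw [smul_comm μ, ← h, ← mul_smul, u.inv_mul, one_smul]

theorem Commute.mul_self_of_mul_eq_neg {R : Type*} [Ring R] {a b : R}
    (h : a * b = -(b * a)) : Commute (a * a) b := by
  rw [Commute, SemiconjBy, mul_assoc, h, mul_neg, ← mul_assoc, h, neg_mul, neg_neg, mul_assoc]

instance : Finite TwGen :=
  Finite.of_surjective ![TwGen.s, .x, .x', .y, .y'] fun t => by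
    cases t
    exacts [⟨0, rfl⟩, ⟨1, rfl⟩, ⟨2, rfl⟩, ⟨3, rfl⟩, ⟨4, rfl⟩]

namespace TwAlg

noncomputable def gen (t : TwGen) : TwAlg := RingQuot.mkAlgHom ℂ TwRel (FreeAlgebra.ι ℂ t)

local notation "S" => gen TwGen.s
local notation "X" => gen TwGen.x
local notation "X'" => gen TwGen.x'
local notation "Y" => gen TwGen.y
local notation "Y'" => gen TwGen.y'

theorem adjoin_range_gen : Algebra.adjoin ℂ (Set.range gen) = ⊤ := by
  rw [show gen = RingQuot.mkAlgHom ℂ TwRel ∘ FreeAlgebra.ι ℂ from rfl, Set.range_comp,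
    Algebra.adjoin_image, FreeAlgebra.adjoin_range_ι, Algebra.map_top, AlgHom.range_eq_top]
  exact RingQuot.mkAlgHom_surjective ℂ TwRel

theorem s_mul_s : S * S = 1 := by simpa [gen] using RingQuot.mkAlgHom_rel ℂ TwRel.s_sq
theorem x_mul_x' : X * X' = 1 := by simpa [gen] using RingQuot.mkAlgHom_rel ℂ TwRel.xx'
theorem x'_mul_x : X' * X = 1 := by simpa [gen] using RingQuot.mkAlgHom_rel ℂ TwRel.x'x
theorem y_mul_y' : Y * Y' = 1 := by simpa [gen] using RingQuot.mkAlgHom_rel ℂ TwRel.yy'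
theorem y'_mul_y : Y' * Y = 1 := by simpa [gen] using RingQuot.mkAlgHom_rel ℂ TwRel.y'y
theorem s_mul_x : S * X = X' * S := by simpa [gen] using RingQuot.mkAlgHom_rel ℂ TwRel.sx
theorem s_mul_y : S * Y = -(Y * S) := by simpa [gen] using RingQuot.mkAlgHom_rel ℂ TwRel.sy
theorem commute_x_y : Commute X Y := by
  simpa [gen, commute_iff_eq] using RingQuot.mkAlgHom_rel ℂ TwRel.xy

noncomputable def unitX : TwAlgˣ := ⟨X, X', x_mul_x', x'_mul_x⟩
noncomputable def unitY : TwAlgˣ := ⟨Y, Y', y_mul_y', y'_mul_y⟩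

theorem x_mul_s : X * S = S * X' := by
  calc X * S = S * (S * X) * S := by simp only [← mul_assoc, s_mul_s, one_mul]
    _ = S * X' := by rw [s_mul_x, mul_assoc, mul_assoc, s_mul_s, mul_one]

theorem y_mul_s : Y * S = -(S * Y) := by rw [s_mul_y, neg_neg]

theorem x_add_x'_mem_center : X + X' ∈ Subalgebra.center ℂ TwAlg := by
  have hxx' : Commute X X' := (Commute.refl unitX.val).units_inv_right
  have hyx : Commute Y X := commute_x_y.symm
  have hyx' : Commute Y X' := (commute_x_y.units_inv_left (u := unitX)).symm
  refine Subalgebra.mem_center_of_forall_commute adjoin_range_gen ?_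
  rintro _ ⟨_ | _ | _ | _ | _, rfl⟩
  · show (X + X') * S = S * (X + X')
    rw [add_mul, mul_add, s_mul_x, x_mul_s, add_comm]
  · exact (Commute.refl X).add_left hxx'.symm
  · exact hxx'.add_left (Commute.refl X')
  · exact (hyx.add_right hyx').symm
  · exact ((hyx.units_inv_left (u := unitY)).add_right (hyx'.units_inv_left (u := unitY))).symm

theorem y_mul_y_mem_center : Y * Y ∈ Subalgebra.center ℂ TwAlg := by
  have hyy : Commute Y (Y * Y) := (Commute.refl Y).mul_right (Commute.refl Y)
  refine Subalgebra.mem_center_of_forall_commute adjoin_range_gen ?_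
  rintro _ ⟨_ | _ | _ | _ | _, rfl⟩
  · show Y * Y * S = S * (Y * Y)
    exact (Commute.mul_self_of_mul_eq_neg y_mul_s).eq
  · exact (commute_x_y.mul_right commute_x_y).symm
  · exact ((commute_x_y.units_inv_left (u := unitX)).mul_right
      (commute_x_y.units_inv_left (u := unitX))).symm
  · exact hyy.symm
  · exact (hyy.units_inv_left (u := unitY)).symm

section Module

variable {M : Type} [AddCommGroup M] [Module TwAlg M] [Module ℂ M] [IsScalarTower ℂ TwAlg M]

theorem exists_common_eigenvector [IsSimpleModule TwAlg M] {a b : ℂ}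
    (ha : ∀ m : M, (X + X') • m = a • m) (hb : ∀ m : M, (Y * Y) • m = b • m) :
    ∃ m : M, m ≠ 0 ∧ ∃ β δ : ℂ, X • m = β • m ∧ Y • m = δ • m := by
  have := IsSimpleModule.nontrivial TwAlg M
  obtain ⟨m, hm⟩ := exists_ne (0 : M)
  obtain ⟨d, hd⟩ := IsAlgClosed.exists_eq_mul_self (a ^ 2 - 4)
  obtain ⟨γ, hγ⟩ := IsAlgClosed.exists_eq_mul_self b
  have hXX (m : M) : X • X • m = a • X • m - m := by
    rw [← ha, add_smul, ← mul_smul X', x'_mul_x, one_smul, add_sub_cancel_right]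
  obtain ⟨m₁, -, hm₁, β, hXm₁⟩ :=
    Module.End.exists_eigenvector_mem_of_quadratic (Algebra.lsmul ℂ ℂ M X)
    (α := (a + d) / 2) (β := (a - d) / 2) (P := ⊤) (fun _ _ => trivial)
    (fun m _ => by
      simp only [Algebra.lsmul_apply, smul_sub, hXX, smul_comm X ((a - d) / 2), smul_smul]
      generalize X • m = x
      linear_combination (norm := module) (hd / 4) • m)
    trivial hm
  let P := Module.End.eigenspace (Algebra.lsmul ℂ ℂ M X) β
  have hP (m : M) : m ∈ P ↔ X • m = β • m := Module.End.mem_eigenspace_iff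
  obtain ⟨m₂, hm₂P, hm₂, δ, hYm₂⟩ :=
    Module.End.exists_eigenvector_mem_of_quadratic (Algebra.lsmul ℂ ℂ M Y)
    (α := γ) (β := -γ) (P := P)
    (fun m hm => by
      rw [hP] at hm ⊢
      rw [Algebra.lsmul_apply, ← mul_smul, commute_x_y.eq, mul_smul, hm, smul_comm])
    (fun m _ => by
      simp only [Algebra.lsmul_apply, smul_sub, ← mul_smul Y Y, hb, smul_comm Y, hγ]
      generalize Y • m = y
      module)
    ((hP m₁).2 hXm₁) hm₁
  exact ⟨m₂, hm₂, β, δ, (hP m₂).1 hm₂P, hYm₂⟩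

theorem finrank_eq_two_of_common_eigenvector [IsSimpleModule TwAlg M] {a : ℂ}
    (ha : ∀ m : M, (X + X') • m = a • m) {m : M} (hm : m ≠ 0) {β δ : ℂ}
    (hX : X • m = β • m) (hY : Y • m = δ • m) : Module.finrank ℂ M = 2 := by
  have hSS : S • S • m = m := by rw [← mul_smul, s_mul_s, one_smul]
  have hSm : S • m ≠ 0 := fun h => hm (by rw [← hSS, h, smul_zero])
  have hX' : X' • m = (a - β) • m := by
    rw [sub_smul, ← ha, ← hX, add_smul, add_sub_cancel_left]
  have hY' : Y' • m = δ⁻¹ • m := unitY.inv_smul_eq_inv_smul_of_smul_eq hm hY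
  have hXS : X • S • m = (a - β) • S • m := by
    rw [← mul_smul, x_mul_s, mul_smul, hX', smul_comm]
  have hX'S : X' • S • m = β • S • m := by
    rw [← mul_smul, ← s_mul_x, mul_smul, hX, smul_comm]
  have hYS : Y • S • m = (-δ) • S • m := by
    rw [← mul_smul, y_mul_s, neg_smul, mul_smul, hY, smul_comm, neg_smul]
  have hY'S : Y' • S • m = (-δ)⁻¹ • S • m := unitY.inv_smul_eq_inv_smul_of_smul_eq hSm hYS
  have hδ : δ ≠ 0 := by
    rintro rfl
    exact hm (by rw [← one_smul TwAlg m, ← y'_mul_y, mul_smul, hY, zero_smul, smul_zero])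
  let v : Fin 2 → M := ![m, S • m]
  let W := Submodule.span ℂ (Set.range v)
  have hv (i : Fin 2) : v i ∈ W := Submodule.subset_span ⟨i, rfl⟩
  have hli : LinearIndependent ℂ v := by
    refine Module.End.eigenvectors_linearIndependent' (Algebra.lsmul ℂ ℂ M Y) ![δ, -δ] ?_ v ?_
    · intro i j
      have hδ' : δ ≠ -δ := fun h => hδ (by linear_combination h / 2)
      fin_cases i <;> fin_cases j <;> simp [hδ', hδ'.symm]
    · simp [Fin.forall_fin_two, Module.End.hasEigenvector_iff, v, hm, hSm, hY, hYS]
  have hW : W = ⊤ := by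
    refine IsSimpleModule.eq_top_of_forall_smul_mem adjoin_range_gen ?_ ?_
    · rintro _ ⟨t, rfl⟩ w hw
      refine Submodule.span_le (p := W.comap (Algebra.lsmul ℂ ℂ M (gen t))).2 ?_ hw
      rintro _ ⟨i, rfl⟩
      fin_cases i <;> cases t <;>
        simp only [Submodule.comap_coe, Algebra.lsmul_coe, Set.mem_preimage, SetLike.mem_coe,
          Fin.zero_eta, Fin.mk_one, Fin.isValue, cons_val_zero, cons_val_one, cons_val_fin_one, v,
          hSS, hX, hX', hY, hY', hXS, hX'S, hYS, hY'S] <;>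
        first | exact hv 0 | exact hv 1 | exact W.smul_mem _ (hv 0) | exact W.smul_mem _ (hv 1)
    · exact fun h => hm ((Submodule.eq_bot_iff W).1 h m (hv 0))
  rw [← finrank_top, ← hW, finrank_span_eq_card hli, Fintype.card_fin]

end Module

end TwAlg

/-- Every simple module over the twisted algebra A is 2-dimensional over ℂ
(the ℂ-action being the one coming from the structure map ℂ → A). -/
theorem twisted_alg_simple_modules_two_dimensional
    (M : Type) [AddCommGroup M] [Module TwAlg M]
    [Module ℂ M] [IsScalarTower ℂ TwAlg M]
    (hM : IsSimpleModule TwAlg M) :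
    Module.finrank ℂ M = 2 := by
  have hrank : Module.rank ℂ TwAlg < #ℂ :=
    (RingQuot.rank_le_aleph0 ℂ TwRel).trans_lt (mk_complex ▸ aleph0_lt_continuum)
  obtain ⟨a, ha⟩ := IsSimpleModule.exists_smul_eq_of_mem_center (M := M) hrank
    TwAlg.x_add_x'_mem_center
  obtain ⟨b, hb⟩ := IsSimpleModule.exists_smul_eq_of_mem_center (M := M) hrank
    TwAlg.y_mul_y_mem_center
  obtain ⟨m, hm, β, δ, hX, hY⟩ := TwAlg.exists_common_eigenvector ha hb
  exact TwAlg.finrank_eq_two_of_common_eigenvector ha hm hX hY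
end

section
/- For w, z ∈ ℂˣ, the pair of matrices S and X(z) acts irreducibly on ℂ² if and only if z² ≠ 1. Precisely: every ℂ-subspace U of ℂ² with S·U ⊆ U and X(z)·U ⊆ U is 0 or ℂ² if and only if z ≠ 1 and z ≠ −1. (The third generator Y acts by the scalar w·Id, so it imposes no additional condition; this shows the untwisted induced module M_{w,z} is simple exactly when z ≠ ±1.) -/
open Matrix

lemma top_of_basis_mem (U : Submodule ℂ (Fin 2 → ℂ))
    (h0 : (![1,0] : Fin 2 → ℂ) ∈ U) (h1 : (![0,1] : Fin 2 → ℂ) ∈ U) : U = ⊤ := by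
  rw [Submodule.eq_top_iff']
  intro x
  have hx : x = x 0 • ![1,0] + x 1 • ![0,1] := by
    funext i; fin_cases i <;> simp
  rw [hx]
  exact U.add_mem (U.smul_mem _ h0) (U.smul_mem _ h1)

/-- For w, z ∈ ℂˣ, the pair of matrices S, X(z) acts irreducibly on ℂ²
(equivalently, the untwisted induced module M_{w,z}, on which y acts by the
scalar w, is simple) if and only if z ≠ 1 and z ≠ −1. -/
theorem untwisted_module_simple_iff (w z : ℂˣ) :
    (∀ U : Submodule ℂ (Fin 2 → ℂ),
      (∀ v ∈ U, Smat.mulVec v ∈ U) → (∀ v ∈ U, (Xmat z).mulVec v ∈ U) →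
      U = ⊥ ∨ U = ⊤)
    ↔ ((z : ℂ) ≠ 1 ∧ (z : ℂ) ≠ -1) := by
  have hz0 : (z : ℂ) ≠ 0 := z.ne_zero
  constructor
  · intro h
    by_contra hc
    have hz : (z : ℂ) = 1 ∨ (z : ℂ) = -1 := by
      rcases not_and_or.mp hc with h1 | h2
      · exact .inl (not_not.mp h1)
      · exact .inr (not_not.mp h2)
    have hzinv : ((z⁻¹ : ℂˣ) : ℂ) = (z : ℂ) := by
      rw [Units.val_inv_eq_inv_val]
      rcases hz with h' | h' <;> rw [h'] <;> norm_num
    set U : Submodule ℂ (Fin 2 → ℂ) := Submodule.span ℂ {![1,1]} with hU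
    have hv : (![1,1] : Fin 2 → ℂ) ∈ U := Submodule.mem_span_singleton_self _
    have hSU : ∀ v ∈ U, Smat.mulVec v ∈ U := by
      intro v hvU
      rcases Submodule.mem_span_singleton.mp hvU with ⟨c, rfl⟩
      rw [Matrix.mulVec_smul]
      have hs : Smat.mulVec ![1,1] = ![1,1] := by
        funext i; fin_cases i <;>
          simp [Smat, Matrix.mulVec, dotProduct, Fin.sum_univ_two]
      rw [hs]
      exact U.smul_mem _ hv
    have hXU : ∀ v ∈ U, (Xmat z).mulVec v ∈ U := by
      intro v hvU
      rcases Submodule.mem_span_singleton.mp hvU with ⟨c, rfl⟩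
      rw [Matrix.mulVec_smul]
      have hs : (Xmat z).mulVec ![1,1] = (z : ℂ) • ![1,1] := by
        funext i; fin_cases i <;>
          simp [Xmat, hzinv, Matrix.mulVec, dotProduct, Fin.sum_univ_two]
      rw [hs]
      exact U.smul_mem _ (U.smul_mem _ hv)
    rcases h U hSU hXU with hbot | htop
    · rw [hbot, Submodule.mem_bot] at hv
      have := congrFun hv 0
      simp at this
    · have hmem : (![1,0] : Fin 2 → ℂ) ∈ U := htop ▸ Submodule.mem_top
      rcases Submodule.mem_span_singleton.mp hmem with ⟨c, hc2⟩
      have h0 := congrFun hc2 0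
      have h1 := congrFun hc2 1
      simp at h0 h1
      rw [h0] at h1
      exact one_ne_zero h1
  · rintro ⟨h1, h2⟩ U hS hX
    by_cases hbot : U = ⊥
    · exact .inl hbot
    right
    obtain ⟨v, hvU, hv0⟩ := (Submodule.ne_bot_iff U).mp hbot
    have hd : (z : ℂ) - (z : ℂ)⁻¹ ≠ 0 := by
      intro h
      have heq : (z : ℂ) = (z : ℂ)⁻¹ := sub_eq_zero.mp h
      have hzz : (z : ℂ) * (z : ℂ) = 1 := by
        calc (z : ℂ) * (z : ℂ) = (z : ℂ) * (z : ℂ)⁻¹ := by rw [← heq]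
          _ = 1 := mul_inv_cancel₀ hz0
      have hfac : ((z : ℂ) - 1) * ((z : ℂ) + 1) = 0 := by linear_combination hzz
      rcases mul_eq_zero.mp hfac with h' | h'
      · exact h1 (sub_eq_zero.mp h')
      · exact h2 (eq_neg_of_add_eq_zero_left h')
    -- the two key vectors
    have hu1 : (![((z : ℂ) - (z : ℂ)⁻¹) * v 0, 0] : Fin 2 → ℂ) ∈ U := by
      have hmem : (Xmat z).mulVec v - (z : ℂ)⁻¹ • v ∈ U :=
        U.sub_mem (hX v hvU) (U.smul_mem _ hvU)
      have he : (Xmat z).mulVec v - (z : ℂ)⁻¹ • v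
          = ![((z : ℂ) - (z : ℂ)⁻¹) * v 0, 0] := by
        funext i; fin_cases i <;>
          simp [Xmat, Matrix.mulVec, dotProduct, Fin.sum_univ_two,
            Units.val_inv_eq_inv_val] <;> ring
      rwa [he] at hmem
    have hu2 : (![0, ((z : ℂ) - (z : ℂ)⁻¹) * v 1] : Fin 2 → ℂ) ∈ U := by
      have hmem : (z : ℂ) • v - (Xmat z).mulVec v ∈ U :=
        U.sub_mem (U.smul_mem _ hvU) (hX v hvU)
      have he : (z : ℂ) • v - (Xmat z).mulVec v
          = ![0, ((z : ℂ) - (z : ℂ)⁻¹) * v 1] := by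
        funext i; fin_cases i <;>
          simp [Xmat, Matrix.mulVec, dotProduct, Fin.sum_univ_two,
            Units.val_inv_eq_inv_val] <;> ring
      rwa [he] at hmem
    have hSe0 : Smat.mulVec ![1,0] = ![0,1] := by
      funext i; fin_cases i <;>
        simp [Smat, Matrix.mulVec, dotProduct, Fin.sum_univ_two]
    have hSe1 : Smat.mulVec ![0,1] = ![1,0] := by
      funext i; fin_cases i <;>
        simp [Smat, Matrix.mulVec, dotProduct, Fin.sum_univ_two]
    by_cases ha : v 0 ≠ 0
    · have hc : (((z : ℂ) - (z : ℂ)⁻¹) * v 0) ≠ 0 := mul_ne_zero hd ha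
      have he0 : (![1,0] : Fin 2 → ℂ) ∈ U := by
        have := U.smul_mem ((((z : ℂ) - (z : ℂ)⁻¹) * v 0)⁻¹) hu1
        have he : ((((z : ℂ) - (z : ℂ)⁻¹) * v 0)⁻¹ : ℂ)
            • (![((z : ℂ) - (z : ℂ)⁻¹) * v 0, 0] : Fin 2 → ℂ) = ![1,0] := by
          funext i; fin_cases i
          · simpa using inv_mul_cancel₀ hc
          · simp
        rwa [he] at this
      have he1 : (![0,1] : Fin 2 → ℂ) ∈ U := by
        have := hS _ he0; rwa [hSe0] at this
      exact top_of_basis_mem U he0 he1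
    · push_neg at ha
      have hb : v 1 ≠ 0 := by
        intro hb
        apply hv0
        funext i; fin_cases i <;> simpa [ha]
      have hc : (((z : ℂ) - (z : ℂ)⁻¹) * v 1) ≠ 0 := mul_ne_zero hd hb
      have he1 : (![0,1] : Fin 2 → ℂ) ∈ U := by
        have := U.smul_mem ((((z : ℂ) - (z : ℂ)⁻¹) * v 1)⁻¹) hu2
        have he : ((((z : ℂ) - (z : ℂ)⁻¹) * v 1)⁻¹ : ℂ)
            • (![0, ((z : ℂ) - (z : ℂ)⁻¹) * v 1] : Fin 2 → ℂ) = ![0,1] := by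
          funext i; fin_cases i
          · simp
          · simpa using inv_mul_cancel₀ hc
        rwa [he] at this
      have he0 : (![1,0] : Fin 2 → ℂ) ∈ U := by
        have := hS _ he1; rwa [hSe1] at this
      exact top_of_basis_mem U he0 he1
end
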